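/- Zero-curvature formulation of the Heisenberg equation: Let m: ℝ×ℝ → ℝ³ be a smooth solution of ∂_t m = −m × ∂_x² m with |m(t,x)| = 1 for all (t,x), and let Γ be its associated matrix. For λ ∈ ℂ define A(t,x) = iλΓ(t,x) and B(t,x) = −(λ/2)(4iλΓ(t,x) + [Γ, ∂_xΓ](t,x)). Then the zero-curvature equation ∂_t A − ∂_x B + AB − BA = 0 holds at every (t,x), for every λ ∈ ℂ. -/

import Mathlib

open Matrix

noncomputable section

/-- The matrix `Γ = [[m₃, m₁ − i m₂],[m₁ + i m₂, −m₃]]` associated to a map `m : ℝ×ℝ → ℝ³`. -/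
def GammaOf (m : ℝ → ℝ → Fin 3 → ℝ) (t x : ℝ) : Matrix (Fin 2) (Fin 2) ℂ :=
  !![(m t x 2 : ℂ), (m t x 0 : ℂ) - Complex.I * (m t x 1 : ℂ);
     (m t x 0 : ℂ) + Complex.I * (m t x 1 : ℂ), -(m t x 2 : ℂ)]

/-- Entrywise spatial derivative of a matrix-valued function. -/
def matDx (A : ℝ → ℝ → Matrix (Fin 2) (Fin 2) ℂ) (t x : ℝ) : Matrix (Fin 2) (Fin 2) ℂ :=
  Matrix.of fun i j => deriv (fun y => A t y i j) x

/-- Entrywise temporal derivative of a matrix-valued function. -/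
def matDt (A : ℝ → ℝ → Matrix (Fin 2) (Fin 2) ℂ) (t x : ℝ) : Matrix (Fin 2) (Fin 2) ℂ :=
  Matrix.of fun i j => deriv (fun s => A s x i j) t

/-- The Lax-pair coefficient matrix `A = iλΓ`. -/
def laxA (m : ℝ → ℝ → Fin 3 → ℝ) (lam : ℂ) (t x : ℝ) : Matrix (Fin 2) (Fin 2) ℂ :=
  (Complex.I * lam) • GammaOf m t x

/-- The Lax-pair coefficient matrix `B = −(λ/2)(4iλΓ + [Γ, ∂_xΓ])`. -/
def laxB (m : ℝ → ℝ → Fin 3 → ℝ) (lam : ℂ) (t x : ℝ) : Matrix (Fin 2) (Fin 2) ℂ :=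
  (-(lam / 2)) • ((4 * Complex.I * lam) • GammaOf m t x +
    (GammaOf m t x * matDx (GammaOf m) t x - matDx (GammaOf m) t x * GammaOf m t x))

/-- Auxiliary: the Gamma matrix of a plain vector. -/
def Gc (v : Fin 3 → ℝ) : Matrix (Fin 2) (Fin 2) ℂ :=
  !![(v 2 : ℂ), (v 0 : ℂ) - Complex.I * (v 1 : ℂ);
     (v 0 : ℂ) + Complex.I * (v 1 : ℂ), -(v 2 : ℂ)]

lemma Heis.hasDerivAt_ofReal {f : ℝ → ℝ} {f' x : ℝ} (h : HasDerivAt f f' x) :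
    HasDerivAt (fun y => (f y : ℂ)) (f' : ℂ) x := by
  simpa [Function.comp_def] using Complex.ofRealCLM.hasFDerivAt.comp_hasDerivAt x h

lemma Heis.hasDerivAt_Gc {f : ℝ → Fin 3 → ℝ} {v : Fin 3 → ℝ} {x : ℝ}
    (h : ∀ k, HasDerivAt (fun y => f y k) (v k) x) (i j : Fin 2) :
    HasDerivAt (fun y => Gc (f y) i j) (Gc v i j) x := by
  fin_cases i <;> fin_cases j <;>
    simp only [Gc, Matrix.cons_val', Matrix.cons_val_zero, Matrix.cons_val_one,
      Matrix.head_cons, Matrix.empty_val', Matrix.cons_val_fin_one, Matrix.head_fin_const,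
      Matrix.of_apply, Fin.isValue, Fin.zero_eta, Fin.mk_one]
  · exact Heis.hasDerivAt_ofReal (h 2)
  · exact (Heis.hasDerivAt_ofReal (h 0)).sub ((Heis.hasDerivAt_ofReal (h 1)).const_mul _)
  · exact (Heis.hasDerivAt_ofReal (h 0)).add ((Heis.hasDerivAt_ofReal (h 1)).const_mul _)
  · exact (Heis.hasDerivAt_ofReal (h 2)).neg

lemma Heis.hasDerivAt_mul_entry {P Q : ℝ → Matrix (Fin 2) (Fin 2) ℂ}
    {P' Q' : Matrix (Fin 2) (Fin 2) ℂ} {x : ℝ}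
    (hP : ∀ i j, HasDerivAt (fun y => P y i j) (P' i j) x)
    (hQ : ∀ i j, HasDerivAt (fun y => Q y i j) (Q' i j) x) (i j : Fin 2) :
    HasDerivAt (fun y => (P y * Q y) i j) ((P' * Q x + P x * Q') i j) x := by
  have h : ∀ k ∈ Finset.univ, HasDerivAt (fun y => P y i k * Q y k j)
      (P' i k * Q x k j + P x i k * Q' k j) x := fun k _ => (hP i k).mul (hQ k j)
  have := HasDerivAt.fun_sum h
  simpa [Matrix.mul_apply, Matrix.add_apply, Finset.sum_add_distrib] using this

/-- **Zero-curvature formulation of the Heisenberg equation.**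
For any smooth solution `m` of `∂_t m = −m × ∂_x² m` with `|m| = 1`, the zero-curvature
equation `∂_t A − ∂_x B + AB − BA = 0` holds for all `λ ∈ ℂ` and all `(t,x)`. -/
theorem heisenberg_zero_curvature
    (m : ℝ → ℝ → Fin 3 → ℝ)
    (hm_smooth : ContDiff ℝ (⊤ : ℕ∞) (fun p : ℝ × ℝ => m p.1 p.2))
    (hm_unit : ∀ t x, (m t x 0) ^ 2 + (m t x 1) ^ 2 + (m t x 2) ^ 2 = 1)
    (hm_heis : ∀ t x, deriv (fun s => m s x) t =
      -(crossProduct (m t x) (deriv (fun y => deriv (fun z => m t z) y) x))) :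
    ∀ (lam : ℂ) (t x : ℝ),
      matDt (laxA m lam) t x - matDx (laxB m lam) t x +
        laxA m lam t x * laxB m lam t x - laxB m lam t x * laxA m lam t x = 0 := by
  intro lam t x
  set F : ℝ × ℝ → Fin 3 → ℝ := fun p => m p.1 p.2 with hFdef
  have hFs : ContDiff ℝ (⊤ : ℕ∞) F := hm_smooth
  set G1 : ℝ × ℝ → Fin 3 → ℝ := fun p => fderiv ℝ F p (0,1) with hG1def
  have hG1s : ContDiff ℝ (⊤ : ℕ∞) G1 := (hFs.fderiv_right (by simp)).clm_apply contDiff_const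
  set G2 : ℝ × ℝ → Fin 3 → ℝ := fun p => fderiv ℝ G1 p (0,1) with hG2def
  set Gt : ℝ × ℝ → Fin 3 → ℝ := fun p => fderiv ℝ F p (1,0) with hGtdef
  have hFd : Differentiable ℝ F := hFs.differentiable (by simp)
  have hG1d : Differentiable ℝ G1 := hG1s.differentiable (by simp)
  -- partial derivatives as HasDerivAt, Pi-valued
  have hxP : ∀ t x, HasDerivAt (fun y => m t y) (G1 (t,x)) x := fun t x =>
    (hFd (t,x)).hasFDerivAt.comp_hasDerivAt x (HasDerivAt.prodMk (hasDerivAt_const x t) (hasDerivAt_id x))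
  have hxxP : ∀ t x, HasDerivAt (fun y => G1 (t,y)) (G2 (t,x)) x := fun t x =>
    (hG1d (t,x)).hasFDerivAt.comp_hasDerivAt x (HasDerivAt.prodMk (hasDerivAt_const x t) (hasDerivAt_id x))
  have htP : ∀ t x, HasDerivAt (fun s => m s x) (Gt (t,x)) t := fun t x =>
    HasFDerivAt.comp_hasDerivAt (f := fun s => (s, x)) t (hFd (t,x)).hasFDerivAt (HasDerivAt.prodMk (hasDerivAt_id' t) (hasDerivAt_const t x))
  have hx : ∀ t x (k : Fin 3), HasDerivAt (fun y => m t y k) (G1 (t,x) k) x :=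
    fun t x k => hasDerivAt_pi.1 (hxP t x) k
  have hxx : ∀ t x (k : Fin 3), HasDerivAt (fun y => G1 (t,y) k) (G2 (t,x) k) x :=
    fun t x k => hasDerivAt_pi.1 (hxxP t x) k
  have ht : ∀ (k : Fin 3), HasDerivAt (fun s => m s x k) (Gt (t,x) k) t :=
    fun k => hasDerivAt_pi.1 (htP t x) k
  -- abbreviations for values at (t,x)
  set mv : Fin 3 → ℝ := m t x with hmv
  set a : Fin 3 → ℝ := G1 (t,x) with ha
  set b : Fin 3 → ℝ := G2 (t,x) with hb
  set cv : Fin 3 → ℝ := Gt (t,x) with hcv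
  -- the PDE in terms of G1/G2/Gt
  have hpde : Gt (t,x) = -(crossProduct (m t x) (G2 (t,x))) := by
    have h1 : deriv (fun s => m s x) t = Gt (t,x) := (htP t x).deriv
    have h2 : (fun y => deriv (fun z => m t z) y) = fun y => G1 (t,y) :=
      funext fun y => (hxP t y).deriv
    have h3 : deriv (fun y => deriv (fun z => m t z) y) x = G2 (t,x) := by
      rw [h2]; exact (hxxP t x).deriv
    rw [← h1, ← h3]; exact hm_heis t x
  have hp0 : cv 0 = -(mv 1 * b 2 - mv 2 * b 1) := by
    have := congrFun hpde 0
    simpa [cross_apply, hmv, hb, hcv] using this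
  have hp1 : cv 1 = -(mv 2 * b 0 - mv 0 * b 2) := by
    have := congrFun hpde 1
    simpa [cross_apply, hmv, hb, hcv] using this
  have hp2 : cv 2 = -(mv 0 * b 1 - mv 1 * b 0) := by
    have := congrFun hpde 2
    simpa [cross_apply, hmv, hb, hcv] using this
  -- derivative of the unit-norm constraint
  have hc2 : mv 0 * a 0 + mv 1 * a 1 + mv 2 * a 2 = 0 := by
    have hq : HasDerivAt (fun y => (m t y 0)^2 + (m t y 1)^2 + (m t y 2)^2)
        ((2 * m t x 0 ^ 1 * a 0 + 2 * m t x 1 ^ 1 * a 1) + 2 * m t x 2 ^ 1 * a 2) x :=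
      (((hx t x 0).pow 2).add ((hx t x 1).pow 2)).add ((hx t x 2).pow 2)
    have he : (fun y => (m t y 0)^2 + (m t y 1)^2 + (m t y 2)^2) = fun _ => (1:ℝ) :=
      funext fun y => hm_unit t y
    rw [he] at hq
    have h0 := hq.unique (hasDerivAt_const x 1)
    simp only [pow_one] at h0
    nlinarith [h0]
  -- complex casts
  have hc1c : (mv 0 : ℂ)^2 + (mv 1 : ℂ)^2 + (mv 2 : ℂ)^2 = 1 := by
    exact_mod_cast congrArg (Complex.ofReal) (hm_unit t x)
  have hc2c : (mv 0 : ℂ) * a 0 + (mv 1 : ℂ) * a 1 + (mv 2 : ℂ) * a 2 = 0 := by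
    exact_mod_cast congrArg (Complex.ofReal) hc2
  have hp0c : (cv 0 : ℂ) = -((mv 1 : ℂ) * b 2 - (mv 2 : ℂ) * b 1) := by
    exact_mod_cast congrArg (Complex.ofReal) hp0
  have hp1c : (cv 1 : ℂ) = -((mv 2 : ℂ) * b 0 - (mv 0 : ℂ) * b 2) := by
    exact_mod_cast congrArg (Complex.ofReal) hp1
  have hp2c : (cv 2 : ℂ) = -((mv 0 : ℂ) * b 1 - (mv 1 : ℂ) * b 0) := by
    exact_mod_cast congrArg (Complex.ofReal) hp2
  -- Gamma identifications
  have hΓ : ∀ t' y, GammaOf m t' y = Gc (m t' y) := fun _ _ => rfl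
  have hE2 : ∀ t' y, matDx (GammaOf m) t' y = Gc (G1 (t',y)) := by
    intro t' y
    ext i j
    exact (Heis.hasDerivAt_Gc (fun k => hx t' y k) i j).deriv
  -- entrywise derivatives of Gamma in x and t at (t,x)
  have hGx : ∀ i j, HasDerivAt (fun y => Gc (m t y) i j) (Gc a i j) x :=
    Heis.hasDerivAt_Gc (fun k => hx t x k)
  have hGxx : ∀ i j, HasDerivAt (fun y => Gc (G1 (t,y)) i j) (Gc b i j) x :=
    Heis.hasDerivAt_Gc (fun k => hxx t x k)
  have hGt : ∀ i j, HasDerivAt (fun s => Gc (m s x) i j) (Gc cv i j) t :=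
    Heis.hasDerivAt_Gc ht
  -- compute matDt (laxA)
  have hA : matDt (laxA m lam) t x = (Complex.I * lam) • Gc cv := by
    ext i j
    have hfun : (fun s => laxA m lam s x i j) =
        fun s => (Complex.I * lam) * Gc (m s x) i j := by
      funext s; simp [laxA, hΓ, Matrix.smul_apply, smul_eq_mul]
    have h := ((hGt i j).const_mul (Complex.I * lam)).deriv
    simp only [matDt, Matrix.of_apply, hfun, Matrix.smul_apply, smul_eq_mul]
    exact h
  -- compute matDx (laxB)
  have hB : matDx (laxB m lam) t x = (-(lam/2)) • ((4 * Complex.I * lam) • Gc a +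
      ((Gc a * Gc a + Gc mv * Gc b) - (Gc b * Gc mv + Gc a * Gc a))) := by
    ext i j
    have hfun : (fun y => laxB m lam t y i j) =
        fun y => (-(lam/2)) * ((4 * Complex.I * lam) * Gc (m t y) i j +
          ((Gc (m t y) * Gc (G1 (t,y))) i j - (Gc (G1 (t,y)) * Gc (m t y)) i j)) := by
      funext y
      simp [laxB, hΓ, hE2, Matrix.smul_apply, smul_eq_mul, Matrix.add_apply, Matrix.sub_apply]
    have hd : HasDerivAt (fun y => (-(lam/2)) * ((4 * Complex.I * lam) * Gc (m t y) i j +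
        ((Gc (m t y) * Gc (G1 (t,y))) i j - (Gc (G1 (t,y)) * Gc (m t y)) i j)))
        ((-(lam/2)) * ((4 * Complex.I * lam) * Gc a i j +
          ((Gc a * Gc (G1 (t,x)) + Gc (m t x) * Gc b) i j -
           (Gc b * Gc (m t x) + Gc (G1 (t,x)) * Gc a) i j))) x := by
      exact (((hGx i j).const_mul _).add
        ((Heis.hasDerivAt_mul_entry hGx hGxx i j).sub
         (Heis.hasDerivAt_mul_entry hGxx hGx i j))).const_mul _
    have h := hd.deriv
    simp only [matDx, Matrix.of_apply, hfun]
    rw [h]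
    simp [Matrix.smul_apply, smul_eq_mul, Matrix.add_apply, Matrix.sub_apply, ← ha, ← hmv]
  -- rewrite laxA, laxB values at (t,x)
  have hAval : laxA m lam t x = (Complex.I * lam) • Gc mv := by
    simp [laxA, hΓ, hmv]
  have hBval : laxB m lam t x = (-(lam/2)) • ((4 * Complex.I * lam) • Gc mv +
      (Gc mv * Gc a - Gc a * Gc mv)) := by
    simp [laxB, hΓ, hE2, hmv, ha]
  rw [hA, hB, hAval, hBval]
  ext i j
  fin_cases i <;> fin_cases j <;>
    simp only [Gc, Matrix.smul_apply, Matrix.add_apply, Matrix.sub_apply, Matrix.mul_apply,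
      Fin.sum_univ_two, smul_eq_mul, Matrix.zero_apply, Matrix.cons_val', Matrix.cons_val_zero,
      Matrix.cons_val_one, Matrix.head_cons, Matrix.empty_val', Matrix.cons_val_fin_one,
      Matrix.head_fin_const, Matrix.of_apply, Fin.isValue, Fin.zero_eta, Fin.mk_one]
  · linear_combination (Complex.I * lam) * hp2c + (2*Complex.I*lam^2*(mv 2 : ℂ)) * hc2c -
      (2*Complex.I*lam^2*(a 2 : ℂ)) * hc1c + (2*Complex.I*lam^2*((a 2:ℂ)*(mv 1:ℂ)^2 - (a 1:ℂ)*(mv 2:ℂ)*(mv 1:ℂ))) * Complex.I_sq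
  · linear_combination (Complex.I * lam) * hp0c - (Complex.I * lam * Complex.I) * hp1c +
      (2*Complex.I*lam^2*((mv 0 : ℂ) - Complex.I * mv 1)) * hc2c -
      (2*Complex.I*lam^2*((a 0 : ℂ) - Complex.I * a 1)) * hc1c + (2*Complex.I*lam^2*((a 0:ℂ)*(mv 1:ℂ)^2 - (a 1:ℂ)*(mv 0:ℂ)*(mv 1:ℂ)) + lam*((mv 2:ℂ)*(b 0:ℂ) - (mv 0:ℂ)*(b 2:ℂ))) * Complex.I_sq
  · linear_combination (Complex.I * lam) * hp0c + (Complex.I * lam * Complex.I) * hp1c +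
      (2*Complex.I*lam^2*((mv 0 : ℂ) + Complex.I * mv 1)) * hc2c -
      (2*Complex.I*lam^2*((a 0 : ℂ) + Complex.I * a 1)) * hc1c + (2*Complex.I*lam^2*((a 0:ℂ)*(mv 1:ℂ)^2 - (a 1:ℂ)*(mv 0:ℂ)*(mv 1:ℂ)) + lam*((mv 0:ℂ)*(b 2:ℂ) - (mv 2:ℂ)*(b 0:ℂ))) * Complex.I_sq
  · linear_combination (-(Complex.I * lam)) * hp2c - (2*Complex.I*lam^2*(mv 2 : ℂ)) * hc2c +
      (2*Complex.I*lam^2*(a 2 : ℂ)) * hc1c - (2*Complex.I*lam^2*((a 2:ℂ)*(mv 1:ℂ)^2 - (a 1:ℂ)*(mv 1:ℂ)*(mv 2:ℂ))) * Complex.I_sq
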